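/- For X = √(g₂^{-1}g₁) with g_i = I + ε h_i in dimension 4, the invariant e₃(X) = (1/6)((Tr X)³ - 3 Tr(X)Tr(X²) + 2 Tr(X³)) satisfies e₃(X) = 4 + (3ε/2) Tr(h₁ - h₂) + (ε²/8)[-5 Tr(h₁²) - 2 Tr(h₁h₂) + 7 Tr(h₂²) + 2 (Tr h₁)² + 2 (Tr h₂)² - 4 Tr(h₁)Tr(h₂)] + O(ε³). -/

import Mathlib

/-!
Write `g₂⁻¹g₁ = 1 + D`. The Neumann series gives `D = ε(h₁ - h₂) + ε²(h₂² - h₂h₁) + O(ε³)`,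
and the tail of the binomial series gives `√(1 + D) = 1 + D/2 - D²/8 + O(‖D‖³)`, so
`X = 1 + εα + ε²β + O(ε³)`. Second-order expansions at `ε = 0` are stable under sums, products
and linear maps, so `Tr X`, `Tr X²`, `Tr X³` and hence `e₃(X)` expand to second order; the
coefficients are read off from `e₃(1 + Y) = C(n,3) + C(n-1,2) e₁(Y) + (n-2) e₂(Y) + e₃(Y)`.
-/

open Asymptotics Filter Matrix

/-- The generalized binomial coefficient `C(1/2, k)`. -/
noncomputable def halfChoose (k : ℕ) : ℝ :=
  (∏ i ∈ Finset.range k, ((1 : ℝ) / 2 - i)) / (k.factorial : ℝ)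

/-- The principal square root of a matrix close to `1`, defined by the binomial
series `√M = ∑_{k≥0} C(1/2,k) (M-1)^k`. -/
noncomputable def matSqrt {n : ℕ} (M : Matrix (Fin n) (Fin n) ℝ) :
    Matrix (Fin n) (Fin n) ℝ :=
  ∑' k : ℕ, halfChoose k • (M - 1) ^ k

lemma halfChoose_succ (k : ℕ) :
    halfChoose (k + 1) = halfChoose k * ((1 / 2 - k) / (k + 1)) := by
  simp only [halfChoose, Finset.prod_range_succ, Nat.factorial_succ]
  push_cast
  rw [div_mul_div_comm, mul_comm ((k : ℝ) + 1)]

lemma abs_halfChoose_le_one (k : ℕ) : |halfChoose k| ≤ 1 := by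
  induction k with
  | zero => simp [halfChoose]
  | succ k ih =>
    have hk : (0 : ℝ) ≤ k := k.cast_nonneg
    have hfactor : |(1 / 2 - k) / (k + 1 : ℝ)| ≤ 1 := by
      rw [abs_div, abs_of_pos (by positivity : (0 : ℝ) < k + 1), div_le_one (by positivity),
        abs_le]
      constructor <;> linarith
    rw [halfChoose_succ, abs_mul]
    simpa using mul_le_mul ih hfactor (abs_nonneg _) zero_le_one

section BinomialSeries

variable {A : Type*} [NormedRing A] [NormedAlgebra ℝ A]

lemma norm_halfChoose_smul_pow_le (t : A) {k : ℕ} (hk : 0 < k) :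
    ‖halfChoose k • t ^ k‖ ≤ ‖t‖ ^ k := by
  rw [norm_smul, Real.norm_eq_abs]
  exact (mul_le_mul (abs_halfChoose_le_one k) (norm_pow_le' t hk) (norm_nonneg _)
    zero_le_one).trans_eq (one_mul _)

lemma norm_tsum_halfChoose_smul_pow_sub_le [CompleteSpace A] {t : A} (ht : ‖t‖ ≤ 1 / 2) :
    ‖∑' k, halfChoose k • t ^ k - (1 + (2 : ℝ)⁻¹ • t - (8 : ℝ)⁻¹ • (t * t))‖ ≤ 2 * ‖t‖ ^ 3 := by
  have hgeom : Summable fun k => ‖t‖ ^ (k + 3) :=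
    (summable_nat_add_iff 3).2 (summable_geometric_of_lt_one (norm_nonneg t) (by linarith))
  have htail_le (k : ℕ) : ‖halfChoose (k + 3) • t ^ (k + 3)‖ ≤ ‖t‖ ^ (k + 3) :=
    norm_halfChoose_smul_pow_le t (by omega)
  have htail : Summable fun k => ‖halfChoose (k + 3) • t ^ (k + 3)‖ :=
    hgeom.of_nonneg_of_le (fun _ => norm_nonneg _) htail_le
  have hhead : ∑ k ∈ Finset.range 3, halfChoose k • t ^ k
      = 1 + (2 : ℝ)⁻¹ • t - (8 : ℝ)⁻¹ • (t * t) := by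
    have h₀ : halfChoose 0 = 1 := by simp [halfChoose]
    have h₁ : halfChoose 1 = 2⁻¹ := by norm_num [halfChoose]
    have h₂ : halfChoose 2 = -8⁻¹ := by norm_num [halfChoose, Finset.prod_range_succ]
    simp only [Finset.sum_range_succ, Finset.range_zero, Finset.sum_empty, h₀, h₁, h₂, pow_zero,
      pow_one, pow_two, one_smul]
    module
  have hsum : Summable fun k => halfChoose k • t ^ k :=
    (summable_nat_add_iff (f := fun k => halfChoose k • t ^ k) 3).1 htail.of_norm
  rw [← hsum.sum_add_tsum_nat_add 3, hhead, add_sub_cancel_left]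
  calc ‖∑' k, halfChoose (k + 3) • t ^ (k + 3)‖
      ≤ ∑' k, ‖t‖ ^ (k + 3) := (norm_tsum_le_tsum_norm htail).trans
        (htail.tsum_le_tsum htail_le hgeom)
    _ = ‖t‖ ^ 3 * (1 - ‖t‖)⁻¹ := by
        simp_rw [pow_add, mul_comm _ (‖t‖ ^ 3)]
        rw [tsum_mul_left, tsum_geometric_of_lt_one (norm_nonneg t) (by linarith)]
    _ ≤ ‖t‖ ^ 3 * 2 := by
        gcongr
        rw [inv_le_comm₀ (by linarith) two_pos]
        linarith
    _ = 2 * ‖t‖ ^ 3 := mul_comm _ _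

end BinomialSeries

section Expansion

variable {E : Type*} [NormedAddCommGroup E] [NormedSpace ℝ E]

def HasSecondOrderExpansion (f : ℝ → E) (c₀ c₁ c₂ : E) : Prop :=
  (fun ε => f ε - (c₀ + ε • c₁ + ε ^ 2 • c₂)) =O[nhds 0] fun ε => ε ^ 3

lemma isBigO_pow_pow_of_le {m n : ℕ} (h : m ≤ n) :
    (fun ε : ℝ => ε ^ n) =O[nhds 0] fun ε => ε ^ m := by
  rcases h.lt_or_eq with h | rfl
  · exact (isLittleO_pow_pow h).isBigO
  · exact isBigO_refl _ _

lemma isBigO_pow_smul_const (n : ℕ) (c : E) :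
    (fun ε : ℝ => ε ^ n • c) =O[nhds 0] fun ε => ε ^ n :=
  ((isBigO_refl _ _).smul (isBigO_const_one ℝ c _)).congr_right fun _ => mul_one _

namespace HasSecondOrderExpansion

variable {f g : ℝ → E} {c₀ c₁ c₂ d₀ d₁ d₂ : E}

lemma of_isBigO_sub (hf : HasSecondOrderExpansion f c₀ c₁ c₂)
    (hfg : (fun ε => g ε - f ε) =O[nhds 0] fun ε => ε ^ 3) :
    HasSecondOrderExpansion g c₀ c₁ c₂ :=
  (hfg.add hf).congr_left fun ε => by abel

lemma polynomial (c₀ c₁ c₂ : E) :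
    HasSecondOrderExpansion (fun ε => c₀ + ε • c₁ + ε ^ 2 • c₂) c₀ c₁ c₂ := by
  simpa [HasSecondOrderExpansion] using isBigO_zero (fun ε : ℝ => ε ^ 3) (nhds (0 : ℝ))

lemma const (c : E) : HasSecondOrderExpansion (fun _ => c) c 0 0 := by
  simpa using polynomial c 0 0

lemma add (hf : HasSecondOrderExpansion f c₀ c₁ c₂) (hg : HasSecondOrderExpansion g d₀ d₁ d₂) :
    HasSecondOrderExpansion (fun ε => f ε + g ε) (c₀ + d₀) (c₁ + d₁) (c₂ + d₂) :=
  (IsBigO.add hf hg).congr_left fun ε => by simp only [smul_add]; abel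

lemma sub (hf : HasSecondOrderExpansion f c₀ c₁ c₂) (hg : HasSecondOrderExpansion g d₀ d₁ d₂) :
    HasSecondOrderExpansion (fun ε => f ε - g ε) (c₀ - d₀) (c₁ - d₁) (c₂ - d₂) :=
  (IsBigO.sub hf hg).congr_left fun ε => by simp only [smul_sub]; abel

lemma const_smul (a : ℝ) (hf : HasSecondOrderExpansion f c₀ c₁ c₂) :
    HasSecondOrderExpansion (fun ε => a • f ε) (a • c₀) (a • c₁) (a • c₂) :=
  (hf.const_smul_left a).congr_left fun ε => by
    simp only [Pi.smul_apply, smul_sub, smul_add, smul_comm a ε, smul_comm a (ε ^ 2)]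

lemma map {F : Type*} [NormedAddCommGroup F] [NormedSpace ℝ F] [FiniteDimensional ℝ E]
    (L : E →ₗ[ℝ] F) (hf : HasSecondOrderExpansion f c₀ c₁ c₂) :
    HasSecondOrderExpansion (fun ε => L (f ε)) (L c₀) (L c₁) (L c₂) :=
  (L.toContinuousLinearMap.isBigO_comp _ _).trans hf |>.congr_left fun ε => by simp

lemma isBigO_one (hf : HasSecondOrderExpansion f c₀ c₁ c₂) :
    f =O[nhds 0] fun _ => (1 : ℝ) := by
  have hpoly : (fun ε : ℝ => c₀ + ε • c₁ + ε ^ 2 • c₂) =O[nhds 0] fun _ => (1 : ℝ) :=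
    ((Continuous.tendsto (by fun_prop) 0).isBigO_one ℝ)
  refine ((hf.trans (isBigO_pow_pow_of_le (Nat.zero_le 3))).add hpoly).congr ?_ ?_ <;> simp

lemma isBigO_id (hf : HasSecondOrderExpansion f 0 c₁ c₂) : f =O[nhds 0] fun ε => ε := by
  have hpoly : (fun ε : ℝ => ε • (c₁ + ε • c₂)) =O[nhds 0] fun ε => ε :=
    ((isBigO_refl _ _).smul ((Continuous.tendsto (by fun_prop) 0).isBigO_one ℝ)).congr_right
      fun _ => mul_one _
  have hrem := hf.trans
    ((isBigO_pow_pow_of_le (by norm_num : 1 ≤ 3)).congr_right fun _ => pow_one _)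
  refine (hrem.add hpoly).congr_left fun ε => ?_
  simp only [zero_add, smul_add, smul_smul, sub_add_cancel, pow_two]

section NormedAlgebra

variable {A : Type*} [NormedRing A] [NormedAlgebra ℝ A] {f g : ℝ → A} {c₀ c₁ c₂ d₀ d₁ d₂ : A}

lemma mul (hf : HasSecondOrderExpansion f c₀ c₁ c₂) (hg : HasSecondOrderExpansion g d₀ d₁ d₂) :
    HasSecondOrderExpansion (fun ε => f ε * g ε)
      (c₀ * d₀) (c₀ * d₁ + c₁ * d₀) (c₀ * d₂ + c₁ * d₁ + c₂ * d₀) := by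
  have hleft := (IsBigO.mul hf hg.isBigO_one).congr_right fun _ => mul_one _
  have hright := (IsBigO.mul (polynomial c₀ c₁ c₂).isBigO_one hg).congr_right fun _ => one_mul _
  have hhigh := (isBigO_pow_smul_const 3 (c₁ * d₂ + c₂ * d₁)).add
    ((isBigO_pow_smul_const 4 (c₂ * d₂)).trans (isBigO_pow_pow_of_le (by norm_num)))
  refine ((hleft.add hright).add hhigh).congr_left fun ε => ?_
  simp only [mul_add, add_mul, mul_sub, sub_mul, smul_mul_assoc, mul_smul_comm]
  module

lemma inverse_one_add_smul [HasSummableGeomSeries A] (b : A) :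
    HasSecondOrderExpansion (fun ε => Ring.inverse (1 + ε • b)) 1 (-b) (b * b) := by
  have hsmul : (fun ε : ℝ => ε • b) =O[nhds 0] fun ε => ε :=
    (isBigO_pow_smul_const 1 b).congr (fun _ => by rw [pow_one]) fun _ => pow_one _
  have hlim : Tendsto (fun ε : ℝ => ε • b) (nhds 0) (nhds 0) := by
    simpa using (tendsto_id (x := nhds (0 : ℝ))).smul_const b
  refine (((NormedRing.inverse_add_norm_diff_nth_order 1 3).comp_tendsto hlim).trans
    (hsmul.norm_left.pow 3)).congr_left fun ε => ?_
  simp [Finset.sum_range_succ, smul_smul, pow_two]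

lemma tsum_halfChoose_smul_pow [CompleteSpace A] (hf : HasSecondOrderExpansion f 0 c₁ c₂) :
    HasSecondOrderExpansion (fun ε => ∑' k, halfChoose k • f ε ^ k)
      1 ((2 : ℝ)⁻¹ • c₁) ((2 : ℝ)⁻¹ • c₂ - (8 : ℝ)⁻¹ • (c₁ * c₁)) := by
  have htrunc : HasSecondOrderExpansion (fun ε => 1 + (2 : ℝ)⁻¹ • f ε - (8 : ℝ)⁻¹ • (f ε * f ε))
      1 ((2 : ℝ)⁻¹ • c₁) ((2 : ℝ)⁻¹ • c₂ - (8 : ℝ)⁻¹ • (c₁ * c₁)) := by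
    simpa using ((const 1).add (hf.const_smul _)).sub ((hf.mul hf).const_smul _)
  have hsmall : ∀ᶠ ε in nhds (0 : ℝ), ‖f ε‖ ≤ 1 / 2 :=
    (tendsto_zero_iff_norm_tendsto_zero.1 (hf.isBigO_id.trans_tendsto tendsto_id)).eventually
      (eventually_le_nhds (by norm_num))
  refine htrunc.of_isBigO_sub (IsBigO.trans ?_ (hf.isBigO_id.norm_left.pow 3))
  refine IsBigO.of_bound 2 (hsmall.mono fun ε hε => ?_)
  simpa using norm_tsum_halfChoose_smul_pow_sub_le hε

end NormedAlgebra

end HasSecondOrderExpansion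

end Expansion

-- Any submultiplicative matrix norm will do: all of them induce the product topology in which
-- `matSqrt` is summed.
attribute [local instance] Matrix.linftyOpNormedRing Matrix.linftyOpNormedAlgebra

lemma hasSecondOrderExpansion_matSqrt_inv_mul {n : ℕ} (a b : Matrix (Fin n) (Fin n) ℝ) :
    HasSecondOrderExpansion (fun ε => matSqrt ((1 + ε • b)⁻¹ * (1 + ε • a)))
      1 ((2 : ℝ)⁻¹ • (a - b)) ((2 : ℝ)⁻¹ • (b * b - b * a) - (8 : ℝ)⁻¹ • ((a - b) * (a - b))) := by
  have hD : HasSecondOrderExpansion (fun ε => Ring.inverse (1 + ε • b) * (1 + ε • a) - 1)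
      0 (a - b) (b * b - b * a) := by
    have := ((HasSecondOrderExpansion.inverse_one_add_smul b).mul
      (by simpa using HasSecondOrderExpansion.polynomial 1 a 0)).sub
      (HasSecondOrderExpansion.const 1)
    convert this using 1 <;> simp <;> abel
  have hX := hD.tsum_halfChoose_smul_pow
  simp only [← nonsing_inv_eq_ringInverse] at hX
  exact hX

lemma HasSecondOrderExpansion.trace_esymm_three {n : ℕ} {X : ℝ → Matrix (Fin n) (Fin n) ℝ}
    {α β : Matrix (Fin n) (Fin n) ℝ} (hX : HasSecondOrderExpansion X 1 α β) :
    HasSecondOrderExpansion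
      (fun ε => ((X ε).trace ^ 3 - 3 * (X ε).trace * (X ε ^ 2).trace + 2 * (X ε ^ 3).trace) / 6)
      ((n : ℝ) * (n - 1) * (n - 2) / 6) ((n - 1) * (n - 2) / 2 * α.trace)
      ((n - 1) * (n - 2) / 2 * β.trace + (n - 2) / 2 * (α.trace ^ 2 - (α * α).trace)) := by
  let tr := traceLinearMap (Fin n) ℝ ℝ
  have t₁ := hX.map tr
  have t₂ := (hX.mul hX).map tr
  have t₃ := (hX.mul (hX.mul hX)).map tr
  have e : HasSecondOrderExpansion _ _ _ _ :=
    ((((t₁.mul t₁).mul t₁).sub ((t₁.mul t₂).const_smul 3)).add (t₃.const_smul 2)).const_smul 6⁻¹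
  simp only [tr, traceLinearMap_apply, trace_add, trace_one, Fintype.card_fin, one_mul, mul_one,
    mul_add, smul_eq_mul, pow_succ, pow_zero, mul_assoc] at e ⊢
  ring_nf at e ⊢
  exact e

theorem e3_expansion_general (h₁ h₂ : Matrix (Fin 4) (Fin 4) ℝ) :
    (fun ε : ℝ =>
        (((matSqrt ((1 + ε • h₂)⁻¹ * (1 + ε • h₁))).trace ^ 3
            - 3 * (matSqrt ((1 + ε • h₂)⁻¹ * (1 + ε • h₁))).trace
              * ((matSqrt ((1 + ε • h₂)⁻¹ * (1 + ε • h₁))) ^ 2).trace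
            + 2 * ((matSqrt ((1 + ε • h₂)⁻¹ * (1 + ε • h₁))) ^ 3).trace) / 6)
          - (4 + 3 * ε / 2 * (h₁ - h₂).trace
            + ε ^ 2 / 8 * (-5 * (h₁ ^ 2).trace - 2 * (h₁ * h₂).trace
              + 7 * (h₂ ^ 2).trace + 2 * h₁.trace ^ 2 + 2 * h₂.trace ^ 2
              - 4 * h₁.trace * h₂.trace)))
      =O[nhds 0] fun ε : ℝ => ε ^ 3 := by
  refine ((hasSecondOrderExpansion_matSqrt_inv_mul h₁ h₂).trace_esymm_three).congr_left
    fun ε => ?_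
  simp only [smul_mul_assoc, mul_smul_comm, trace_smul, trace_sub, sub_mul, mul_sub,
    trace_mul_comm h₂ h₁, pow_two, smul_eq_mul]
  ring

/-- In dimension 4, for `X = √(g₂⁻¹g₁)` with `g_i = I + ε h_i`, the invariant
`e₃(X) = ((Tr X)³ - 3 Tr X Tr X² + 2 Tr X³)/6` satisfies
`e₃(X) = 4 + (3ε/2)Tr(h₁-h₂) + (ε²/8)[-5 Tr h₁² - 2 Tr(h₁h₂) + 7 Tr h₂²
  + 2(Tr h₁)² + 2(Tr h₂)² - 4 Tr h₁ Tr h₂] + O(ε³)`. -/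
theorem e3_expansion (h₁ h₂ : Matrix (Fin 4) (Fin 4) ℝ)
    (hs₁ : h₁.IsSymm) (hs₂ : h₂.IsSymm) :
    (fun ε : ℝ =>
        (((matSqrt ((1 + ε • h₂)⁻¹ * (1 + ε • h₁))).trace ^ 3
            - 3 * (matSqrt ((1 + ε • h₂)⁻¹ * (1 + ε • h₁))).trace
              * ((matSqrt ((1 + ε • h₂)⁻¹ * (1 + ε • h₁))) ^ 2).trace
            + 2 * ((matSqrt ((1 + ε • h₂)⁻¹ * (1 + ε • h₁))) ^ 3).trace) / 6)
          - (4 + 3 * ε / 2 * (h₁ - h₂).trace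
            + ε ^ 2 / 8 * (-5 * (h₁ ^ 2).trace - 2 * (h₁ * h₂).trace
              + 7 * (h₂ ^ 2).trace + 2 * h₁.trace ^ 2 + 2 * h₂.trace ^ 2
              - 4 * h₁.trace * h₂.trace)))
      =O[nhds 0] fun ε : ℝ => ε ^ 3 :=
  e3_expansion_general h₁ h₂
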